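/- Let P be the transition matrix of a positive recurrent single-birth Markov chain on ℤ⁺ with stationary distribution π having finite mean, and assume S_P := sup_{h∈H} sup_{l∈ℤ⁺} |m_l(h)| < ∞. Let Q be a transition matrix on ℤ⁺ and let X be a random variable whose distribution is stationary for Q, with finite mean. Suppose that either ∑_{k>m} P_{i,k} ≥ ∑_{k>m} Q_{i,k} for all i,m∈ℤ⁺, or ∑_{k>m} P_{i,k} ≤ ∑_{k>m} Q_{i,k} for all i,m∈ℤ⁺. Then d_TV(X,π) ≤ S_P · | 𝔼X − ∑_{i=0}^∞ ℙ(X=i) ∑_{j=0}^∞ ∑_{k=j+1}^∞ P_{i,k} |. -/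

import Mathlib

open scoped BigOperators

/-- `P` is a (row-stochastic) transition matrix on `ℤ⁺ = ℕ`. -/
def IsTransMat (P : ℕ → ℕ → ℝ) : Prop :=
  (∀ i j, 0 ≤ P i j) ∧ ∀ i, HasSum (P i) 1

/-- `P` is the transition matrix of a single-birth chain:
`P i (i+1) > 0` and `P i j = 0` for `j > i + 1`. -/
def IsSingleBirth (P : ℕ → ℕ → ℝ) : Prop :=
  IsTransMat P ∧ (∀ i, 0 < P i (i + 1)) ∧ ∀ i j, i + 1 < j → P i j = 0

/-- `pim` is a stationary distribution for `P`. -/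
def IsStationaryPMF (P : ℕ → ℕ → ℝ) (pim : ℕ → ℝ) : Prop :=
  (∀ j, 0 ≤ pim j) ∧ HasSum pim 1 ∧ ∀ j, ∑' i, pim i * P i j = pim j

/-- Tail probability `∑_{k > j} μ k` of a mass function `μ`. -/
noncomputable def tail (μ : ℕ → ℝ) (j : ℕ) : ℝ := ∑' k, if j < k then μ k else 0

/-- Total variation distance between two mass functions on `ℕ`:
`d_TV = ∑_j |μ j - ν j| = sup_{|h| ≤ 1} |𝔼 h(X) - 𝔼 h(Y)|`. -/
noncomputable def dTV (μ ν : ℕ → ℝ) : ℝ := ∑' j, |μ j - ν j|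

/-- `m` is the sequence `m_j(h)` given by the single-birth recursion:
`m_0(h) = ĥ(0)/P_{0,1}` and, for `j ≥ 1`,
`m_j(h) = (1/P_{j,j+1}) (ĥ(j) + ∑_{k=0}^{j-1} m_k(h) ∑_{l=0}^{k} P_{j,l})`,
where `ĥ(j) = h(j) - ∑_k h(k) π_k`. -/
def IsMSeq (P : ℕ → ℕ → ℝ) (pim : ℕ → ℝ) (h : ℕ → ℝ) (m : ℕ → ℝ) : Prop :=
  m 0 = (h 0 - ∑' k, h k * pim k) / P 0 1 ∧
  ∀ j, 1 ≤ j →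
    m j = (1 / P j (j + 1)) *
      ((h j - ∑' k, h k * pim k) +
        ∑ k ∈ Finset.range j, m k * ∑ l ∈ Finset.range (k + 1), P j l)

/-- The set of values `|m_l(h)|` over `h ∈ H` (i.e. `|h| ≤ 1`) and `l ∈ ℤ⁺`;
its supremum is `S_P`. -/
def MSet (P : ℕ → ℕ → ℝ) (pim : ℕ → ℝ) : Set ℝ :=
  {x | ∃ h m, (∀ j, |h j| ≤ 1) ∧ IsMSeq P pim h m ∧ ∃ l, x = |m l|}

/-! ### Auxiliary constructions and lemmas -/

noncomputable def mseq (P : ℕ → ℕ → ℝ) (pim h : ℕ → ℝ) : ℕ → ℝ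
  | 0 => (h 0 - ∑' k, h k * pim k) / P 0 1
  | (j+1) => (1 / P (j+1) (j+1+1)) *
      ((h (j+1) - ∑' k, h k * pim k) +
        ∑ k ∈ (Finset.range (j+1)).attach,
          mseq P pim h k.1 * ∑ l ∈ Finset.range (k.1 + 1), P (j+1) l)
  decreasing_by exact Finset.mem_range.mp k.2

lemma mseq_zero (P : ℕ → ℕ → ℝ) (pim h : ℕ → ℝ) :
    mseq P pim h 0 = (h 0 - ∑' k, h k * pim k) / P 0 1 := by rw [mseq]

lemma mseq_succ (P : ℕ → ℕ → ℝ) (pim h : ℕ → ℝ) (j : ℕ) :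
    mseq P pim h (j+1) = (1 / P (j+1) (j+1+1)) *
      ((h (j+1) - ∑' k, h k * pim k) +
        ∑ k ∈ Finset.range (j+1),
          mseq P pim h k * ∑ l ∈ Finset.range (k + 1), P (j+1) l) := by
  rw [mseq, Finset.sum_attach (Finset.range (j+1))
    (fun k => mseq P pim h k * ∑ l ∈ Finset.range (k + 1), P (j+1) l)]

lemma mseq_isMSeq (P : ℕ → ℕ → ℝ) (pim h : ℕ → ℝ) :
    IsMSeq P pim h (mseq P pim h) := by
  refine ⟨mseq_zero P pim h, fun j hj => ?_⟩
  cases j with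
  | zero => omega
  | succ j' => exact mseq_succ P pim h j'

/-- key Fubini/Abel lemma -/
lemma key_fubini {q w : ℕ → ℝ} {C : ℝ} (hq : ∀ k, 0 ≤ q k)
    (hqs : Summable fun k : ℕ => (k : ℝ) * q k) (hw : ∀ j, |w j| ≤ C) :
    Summable (fun k => q k * ∑ j ∈ Finset.range k, w j) ∧
    Summable (fun j => w j * tail q j) ∧
    (∑' k, q k * ∑ j ∈ Finset.range k, w j) = ∑' j, w j * tail q j := by
  have hC : 0 ≤ C := le_trans (abs_nonneg _) (hw 0)
  set f : ℕ → ℕ → ℝ := fun j k => if j < k then w j * q k else 0 with hf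
  set G : ℕ × ℕ → ℝ := fun p => if p.2 < p.1 then C * q p.1 else 0 with hG
  have hGnn : 0 ≤ G := by
    intro p; by_cases h : p.2 < p.1 <;> simp [hG, h, mul_nonneg hC (hq _)]
  have hGrow : ∀ k : ℕ, Summable fun j => G (k, j) := by
    intro k
    apply summable_of_ne_finset_zero (s := Finset.range k)
    intro j hj
    simp only [hG]
    rw [if_neg (by simpa using hj)]
  have hGrowsum : ∀ k : ℕ, ∑' j, G (k, j) = C * ((k : ℝ) * q k) := by
    intro k
    rw [tsum_eq_sum (s := Finset.range k) (fun j hj => by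
      simp only [hG]; rw [if_neg (by simpa using hj)])]
    rw [Finset.sum_congr rfl (fun j hj => by
      simp only [hG]; rw [if_pos (Finset.mem_range.mp hj)])]
    simp [Finset.sum_const, Finset.card_range]; ring
  have hGsum : Summable G := by
    rw [summable_prod_of_nonneg hGnn]
    refine ⟨hGrow, ?_⟩
    apply Summable.congr (f := fun k : ℕ => C * ((k : ℝ) * q k)) (hqs.mul_left C)
    intro k; exact (hGrowsum k).symm
  have hFsum : Summable (Function.uncurry f) := by
    apply Summable.of_abs
    refine Summable.of_nonneg_of_le (fun p => abs_nonneg _)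
      (f := fun p : ℕ × ℕ => G (p.2, p.1)) ?_ ?_
    · intro p
      simp only [Function.uncurry, hf, hG]
      by_cases h : p.1 < p.2
      · simp only [if_pos h, abs_mul]
        exact mul_le_mul_of_nonneg_right (hw _) (abs_nonneg _) |>.trans
          (by rw [abs_of_nonneg (hq _)])
      · simp [if_neg h]
    · exact hGsum.comp_injective (fun a b h => by
        simpa [Prod.ext_iff, and_comm] using (Prod.ext_iff.mp h))
  have hrow : ∀ j, ∑' k, f j k = w j * tail q j := by
    intro j
    rw [tail, ← tsum_mul_left]
    congr 1; funext k
    simp only [hf, mul_ite, mul_zero]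
  have hcol : ∀ k, ∑' j, f j k = q k * ∑ j ∈ Finset.range k, w j := by
    intro k
    rw [tsum_eq_sum (s := Finset.range k) (fun j hj => by
      simp only [hf]; rw [if_neg (by simpa using hj)])]
    rw [Finset.sum_congr rfl (fun j hj => by
      simp only [hf]; rw [if_pos (Finset.mem_range.mp hj)])]
    rw [← Finset.sum_mul]; ring
  have hsum1 : Summable (fun k => q k * ∑ j ∈ Finset.range k, w j) := by
    apply Summable.of_abs
    refine Summable.of_nonneg_of_le (fun k => abs_nonneg _)
      (f := fun k : ℕ => C * ((k : ℝ) * q k)) ?_ (hqs.mul_left C)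
    intro k
    rw [abs_mul, abs_of_nonneg (hq k)]
    calc q k * |∑ j ∈ Finset.range k, w j| ≤ q k * (C * k) := by
          apply mul_le_mul_of_nonneg_left _ (hq k)
          calc |∑ j ∈ Finset.range k, w j| ≤ ∑ j ∈ Finset.range k, |w j| :=
                Finset.abs_sum_le_sum_abs _ _
            _ ≤ ∑ _j ∈ Finset.range k, C := Finset.sum_le_sum (fun j _ => hw j)
            _ = C * k := by simp [Finset.sum_const, Finset.card_range]; ring
      _ = C * ((k:ℝ) * q k) := by ring
  have hsum2 : Summable (fun j => w j * tail q j) := by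
    apply Summable.congr (f := fun j => ∑' k, f j k) _ hrow
    exact hFsum.prod
  refine ⟨hsum1, hsum2, ?_⟩
  calc (∑' k, q k * ∑ j ∈ Finset.range k, w j) = ∑' k, ∑' j, f j k := by
        exact tsum_congr (fun k => (hcol k).symm)
    _ = ∑' j, ∑' k, f j k := Summable.tsum_comm hFsum
    _ = ∑' j, w j * tail q j := tsum_congr hrow

lemma tail_facts {q : ℕ → ℝ} (hq : ∀ k, 0 ≤ q k)
    (hqs : Summable fun k : ℕ => (k : ℝ) * q k) :
    Summable (tail q) ∧ (∑' j, tail q j) = ∑' k : ℕ, (k : ℝ) * q k := by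
  obtain ⟨h1, h2, h3⟩ := key_fubini (q := q) (w := fun _ => (1:ℝ)) (C := 1) hq hqs
    (fun j => by norm_num)
  constructor
  · exact h2.congr (fun j => by simp)
  · have e3 : (∑' k, q k * ∑ j ∈ Finset.range k, (1:ℝ)) = ∑' j, tail q j := by
      rw [h3]; exact tsum_congr (fun j => one_mul _)
    rw [← e3]
    exact tsum_congr (fun k => by
      rw [Finset.sum_const, Finset.card_range, nsmul_eq_mul, mul_one, mul_comm])

lemma row_sum_one {P : ℕ → ℕ → ℝ} (hP : IsSingleBirth P) (i : ℕ) :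
    ∑ k ∈ Finset.range (i+2), P i k = 1 := by
  have h0 : ∀ k ∉ Finset.range (i+2), P i k = 0 := by
    intro k hk
    exact hP.2.2 i k (by have := Finset.mem_range.not.mp hk; omega)
  rw [← tsum_eq_sum (L := SummationFilter.unconditional ℕ) h0, (hP.1.2 i).tsum_eq]

lemma steinA {P : ℕ → ℕ → ℝ} {pim h m : ℕ → ℝ}
    (hP : IsSingleBirth P) (hm : IsMSeq P pim h m) (i : ℕ) :
    h i - (∑' k, h k * pim k) =
      (∑ k ∈ Finset.range (i+2), P i k * (∑ l ∈ Finset.range k, m l))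
        - ∑ l ∈ Finset.range i, m l := by
  set c := ∑' k, h k * pim k with hc
  set f : ℕ → ℝ := fun k => ∑ l ∈ Finset.range k, m l with hfdef
  have key : P i (i+1) * m i =
      (h i - c) + ∑ k ∈ Finset.range i, m k * ∑ l ∈ Finset.range (k + 1), P i l := by
    rcases Nat.eq_zero_or_pos i with rfl | hi
    · have hne : P 0 1 ≠ 0 := ne_of_gt (hP.2.1 0)
      simp only [Finset.range_zero, Finset.sum_empty, add_zero]
      rw [hm.1]
      field_simp
      rfl
    · rw [hm.2 i hi]
      have hne : P i (i+1) ≠ 0 := ne_of_gt (hP.2.1 i)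
      field_simp
      rfl
  have expand : (∑ k ∈ Finset.range (i+2), P i k * f k) - f i
      = ∑ k ∈ Finset.range (i+2), P i k * (f k - f i) := by
    rw [Finset.sum_congr rfl (fun k _ => mul_sub (P i k) (f k) (f i))]
    rw [Finset.sum_sub_distrib, ← Finset.sum_mul, row_sum_one hP, one_mul]
  have hsplit : ∑ k ∈ Finset.range (i+2), P i k * (f k - f i)
      = (∑ k ∈ Finset.range i, P i k * (f k - f i)) + P i (i+1) * m i := by
    rw [Finset.sum_range_succ, Finset.sum_range_succ]
    have h1 : f i - f i = 0 := sub_self _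
    have h2 : f (i+1) - f i = m i := by
      simp only [hfdef, Finset.sum_range_succ]; ring
    rw [h1, h2, mul_zero, add_zero]
  have hneg : ∀ k ∈ Finset.range i, f k - f i = -(∑ l ∈ Finset.Ico k i, m l) := by
    intro k hk
    have hki : k ≤ i := le_of_lt (Finset.mem_range.mp hk)
    have h3 := Finset.sum_Ico_consecutive m (Nat.zero_le k) hki
    simp only [← Finset.range_eq_Ico] at h3
    simp only [hfdef]; linarith
  have hswap : ∑ k ∈ Finset.range i, P i k * ∑ l ∈ Finset.Ico k i, m l
      = ∑ l ∈ Finset.range i, m l * ∑ k ∈ Finset.range (l+1), P i k := by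
    have step1 : ∀ k, Finset.Ico k i = (Finset.range i).filter (fun l => k ≤ l) := by
      intro k; ext l
      simp [Finset.mem_Ico, Finset.mem_range, Finset.mem_filter, and_comm]
    calc ∑ k ∈ Finset.range i, P i k * ∑ l ∈ Finset.Ico k i, m l
        = ∑ k ∈ Finset.range i, ∑ l ∈ Finset.range i,
            if k ≤ l then P i k * m l else 0 := by
          refine Finset.sum_congr rfl (fun k _ => ?_)
          rw [step1 k, Finset.mul_sum, Finset.sum_filter]
      _ = ∑ l ∈ Finset.range i, ∑ k ∈ Finset.range i,
            if k ≤ l then P i k * m l else 0 := Finset.sum_comm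
      _ = ∑ l ∈ Finset.range i, m l * ∑ k ∈ Finset.range (l+1), P i k := by
          refine Finset.sum_congr rfl (fun l hl => ?_)
          have hli : l < i := Finset.mem_range.mp hl
          have hfil : (Finset.range i).filter (fun k => k ≤ l) = Finset.range (l+1) := by
            ext k
            simp only [Finset.mem_filter, Finset.mem_range, Nat.lt_succ_iff]
            exact ⟨fun ⟨_, h2⟩ => h2, fun hkl => ⟨lt_of_le_of_lt hkl hli, hkl⟩⟩
          rw [← Finset.sum_filter, hfil, Finset.mul_sum]
          exact Finset.sum_congr rfl (fun k _ => mul_comm _ _)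
  rw [expand, hsplit]
  rw [Finset.sum_congr rfl (fun k hk => by rw [hneg k hk])]
  rw [Finset.sum_congr rfl (fun k _ => (mul_neg _ _))]
  rw [Finset.sum_neg_distrib, hswap, key]
  ring


set_option maxHeartbeats 2000000 in
/-- **Corollary 3, second bound (comparison under domination).** If, in
addition, either `P` dominates `Q` (`∑_{k>m} Q_{i,k} ≤ ∑_{k>m} P_{i,k}` for all
`i, m`) or `Q` dominates `P`, then
`d_TV(X, π) ≤ S_P |𝔼X - ∑_i ℙ(X=i) ∑_j ∑_{k>j} P_{i,k}|`. -/
theorem comparison_under_domination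
    (P : ℕ → ℕ → ℝ) (pim : ℕ → ℝ)
    (hP : IsSingleBirth P) (hpim : IsStationaryPMF P pim)
    (hpimMean : Summable fun k : ℕ => (k : ℝ) * pim k)
    (hSfin : BddAbove (MSet P pim))
    (Q : ℕ → ℕ → ℝ) (hQ : IsTransMat Q)
    (μ : ℕ → ℝ) (hμ0 : ∀ j, 0 ≤ μ j) (hμ1 : HasSum μ 1)
    (hμstat : ∀ j, ∑' i, μ i * Q i j = μ j)
    (hμMean : Summable fun k : ℕ => (k : ℝ) * μ k)
    (hdom : (∀ i m : ℕ, tail (Q i) m ≤ tail (P i) m) ∨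
            (∀ i m : ℕ, tail (P i) m ≤ tail (Q i) m)) :
    dTV μ pim ≤ sSup (MSet P pim) *
      |(∑' k : ℕ, (k : ℝ) * μ k) - ∑' i, μ i * ∑' j : ℕ, tail (P i) j| := by
  classical
  obtain ⟨⟨hPnn, hProw⟩, hPpos, hPzero⟩ := hP
  have hP' : IsSingleBirth P := ⟨⟨hPnn, hProw⟩, hPpos, hPzero⟩
  have hμsum : Summable μ := hμ1.summable
  have hπsum : Summable pim := hpim.2.1.summable
  -- the extremal test function and its m-sequence
  set S := sSup (MSet P pim) with hSdef
  set h : ℕ → ℝ := fun j => if pim j ≤ μ j then 1 else -1 with hhdef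
  have hh1 : ∀ j, |h j| ≤ 1 := by
    intro j; by_cases hc : pim j ≤ μ j <;> simp [hhdef, hc]
  set m : ℕ → ℝ := mseq P pim h with hmdef
  have hmseq : IsMSeq P pim h m := mseq_isMSeq P pim h
  have hzero_mem : (0:ℝ) ∈ MSet P pim := by
    refine ⟨fun _ => 0, fun _ => 0, by norm_num, ⟨by simp, fun j hj => by simp⟩, 0, by simp⟩
  have hS0 : 0 ≤ S := le_csSup hSfin hzero_mem
  have hmb : ∀ l, |m l| ≤ S := fun l => le_csSup hSfin ⟨h, m, hh1, hmseq, l, rfl⟩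
  set c := ∑' k, h k * pim k with hcdef
  set f : ℕ → ℝ := fun k => ∑ l ∈ Finset.range k, m l with hfdef
  have hfb : ∀ k, |f k| ≤ S * k := by
    intro k
    calc |f k| ≤ ∑ l ∈ Finset.range k, |m l| := Finset.abs_sum_le_sum_abs _ _
      _ ≤ ∑ _l ∈ Finset.range k, S := Finset.sum_le_sum (fun l _ => hmb l)
      _ = S * k := by simp [Finset.sum_const, Finset.card_range]; ring
  -- basic Q facts
  have hQle1 : ∀ i k, Q i k ≤ 1 := fun i k =>
    le_hasSum (hQ.2 i) k (fun b _ => hQ.1 i b)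
  -- summability of μ i * (k * Q i k) over pairs
  set Mc : ℕ → ℕ → ℝ := fun i k => μ i * ((k : ℝ) * Q i k) with hMcdef
  have hMcnn : ∀ i k, 0 ≤ Mc i k := fun i k =>
    mul_nonneg (hμ0 i) (mul_nonneg (Nat.cast_nonneg k) (hQ.1 i k))
  have hMcval : ∀ k, ∑' i, Mc i k = (k : ℝ) * μ k := by
    intro k
    have : ∀ i, Mc i k = (k : ℝ) * (μ i * Q i k) := fun i => by simp only [hMcdef]; ring
    rw [tsum_congr this, tsum_mul_left, hμstat k]
  have hM : Summable (Function.uncurry Mc) := by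
    have hN : Summable (fun p : ℕ × ℕ => Mc p.2 p.1) := by
      rw [summable_prod_of_nonneg (fun p => hMcnn p.2 p.1)]
      constructor
      · intro k
        refine Summable.of_nonneg_of_le (fun i => hMcnn i k)
          (f := fun i => (k : ℝ) * μ i) ?_ (hμsum.mul_left _)
        intro i
        simp only [hMcdef]
        calc μ i * ((k:ℝ) * Q i k) ≤ μ i * ((k:ℝ) * 1) := by
              apply mul_le_mul_of_nonneg_left _ (hμ0 i)
              exact mul_le_mul_of_nonneg_left (hQle1 i k) (Nat.cast_nonneg k)
          _ = (k : ℝ) * μ i := by ring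
      · exact hμMean.congr (fun k => (hMcval k).symm)
    exact hN.comp_injective (i := Prod.swap) Prod.swap_injective
  have hQrowSummable : ∀ i, μ i ≠ 0 → Summable (fun k : ℕ => (k : ℝ) * Q i k) := by
    intro i hne
    have h1 : Summable (fun k => Mc i k) := hM.prod_factor i
    refine (h1.mul_left (μ i)⁻¹).congr (fun k => ?_)
    simp only [hMcdef]
    rw [← mul_assoc, inv_mul_cancel₀ hne, one_mul]
  -- μ-weighted mean of Q rows
  set TQ : ℕ → ℝ := fun i => ∑' k : ℕ, (k : ℝ) * Q i k with hTQdef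
  have hμTQeq : ∀ i, μ i * TQ i = ∑' k, Mc i k := fun i => (tsum_mul_left).symm
  have hμTQ : Summable (fun i => μ i * TQ i) :=
    (hM.prod).congr (fun i => (hμTQeq i).symm)
  have hEX : ∑' i, μ i * TQ i = ∑' k : ℕ, (k : ℝ) * μ k := by
    rw [tsum_congr hμTQeq, ← Summable.tsum_comm hM]
    exact tsum_congr hMcval
  -- P row facts
  have hkP : ∀ i, Summable (fun k : ℕ => (k : ℝ) * P i k) := by
    intro i
    apply summable_of_ne_finset_zero (s := Finset.range (i+2))
    intro k hk
    rw [hPzero i k (by have := Finset.mem_range.not.mp hk; omega),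
      mul_zero]
  have htailP : ∀ i, Summable (tail (P i)) := fun i => (tail_facts (hPnn i) (hkP i)).1
  have htailPsum : ∀ i, (∑' j, tail (P i) j) = ∑' k : ℕ, (k : ℝ) * P i k :=
    fun i => (tail_facts (hPnn i) (hkP i)).2
  set TP : ℕ → ℝ := fun i => ∑' j, tail (P i) j with hTPdef
  have hTPle : ∀ i, TP i ≤ (i : ℝ) + 1 := by
    intro i
    rw [hTPdef]
    simp only
    rw [htailPsum i, tsum_eq_sum (s := Finset.range (i+2)) (fun k hk => by
      rw [hPzero i k (by have := Finset.mem_range.not.mp hk; omega),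
        mul_zero])]
    calc ∑ k ∈ Finset.range (i+2), (k:ℝ) * P i k
        ≤ ∑ k ∈ Finset.range (i+2), ((i:ℝ)+1) * P i k := by
          refine Finset.sum_le_sum (fun k hk => ?_)
          apply mul_le_mul_of_nonneg_right _ (hPnn i k)
          have hk2 : k < i + 2 := Finset.mem_range.mp hk
          exact_mod_cast (by omega : k ≤ i + 1)
      _ = ((i:ℝ)+1) * ∑ k ∈ Finset.range (i+2), P i k := by rw [Finset.mul_sum]
      _ = (i:ℝ) + 1 := by rw [row_sum_one hP', mul_one]
  have hTPnn : ∀ i, 0 ≤ TP i := by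
    intro i
    apply tsum_nonneg
    intro j
    apply tsum_nonneg
    intro k
    split <;> simp [hPnn i k]
  have hμTP : Summable (fun i => μ i * TP i) := by
    have hmaj : Summable (fun i : ℕ => (i : ℝ) * μ i + μ i) := hμMean.add hμsum
    apply Summable.of_abs
    refine Summable.of_nonneg_of_le (fun i => abs_nonneg _)
      (f := fun i : ℕ => (i : ℝ) * μ i + μ i) ?_ hmaj
    intro i
    rw [abs_of_nonneg (mul_nonneg (hμ0 i) (hTPnn i))]
    calc μ i * TP i ≤ μ i * ((i:ℝ)+1) :=
          mul_le_mul_of_nonneg_left (hTPle i) (hμ0 i)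
      _ = (i:ℝ) * μ i + μ i := by ring
  -- μ-weighted sums of f against Q
  set Wc : ℕ → ℕ → ℝ := fun i k => μ i * (Q i k * f k) with hWcdef
  have hW : Summable (Function.uncurry Wc) := by
    apply Summable.of_abs
    refine Summable.of_nonneg_of_le (fun p => abs_nonneg _)
      (f := fun p : ℕ × ℕ => S * Function.uncurry Mc p) ?_ (hM.mul_left S)
    rintro ⟨i, k⟩
    simp only [Function.uncurry, hWcdef, hMcdef, abs_mul]
    rw [abs_of_nonneg (hμ0 i), abs_of_nonneg (hQ.1 i k)]
    calc μ i * (Q i k * |f k|) ≤ μ i * (Q i k * (S * k)) := by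
          apply mul_le_mul_of_nonneg_left _ (hμ0 i)
          exact mul_le_mul_of_nonneg_left (hfb k) (hQ.1 i k)
      _ = S * (μ i * ((k:ℝ) * Q i k)) := by ring
  set g : ℕ → ℝ := fun i => ∑' k, Q i k * f k with hgdef
  have hμgeq : ∀ i, μ i * g i = ∑' k, Wc i k := fun i => (tsum_mul_left).symm
  have hμg : Summable (fun i => μ i * g i) := (hW.prod).congr (fun i => (hμgeq i).symm)
  have hμf : Summable (fun i => μ i * f i) := by
    apply Summable.of_abs
    refine Summable.of_nonneg_of_le (fun i => abs_nonneg _)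
      (f := fun i : ℕ => S * ((i : ℝ) * μ i)) ?_ (hμMean.mul_left S)
    intro i
    rw [abs_mul, abs_of_nonneg (hμ0 i)]
    calc μ i * |f i| ≤ μ i * (S * i) := mul_le_mul_of_nonneg_left (hfb i) (hμ0 i)
      _ = S * ((i:ℝ) * μ i) := by ring
  have hB : ∑' i, μ i * g i = ∑' i, μ i * f i := by
    calc ∑' i, μ i * g i = ∑' i, ∑' k, Wc i k := tsum_congr hμgeq
      _ = ∑' k, ∑' i, Wc i k := (Summable.tsum_comm hW).symm
      _ = ∑' k, (∑' i, μ i * Q i k) * f k := by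
          refine tsum_congr (fun k => ?_)
          rw [← tsum_mul_right]
          exact tsum_congr (fun i => by simp only [hWcdef]; ring)
      _ = ∑' k, μ k * f k := by
          refine tsum_congr (fun k => ?_)
          rw [hμstat k]
  -- the basic identity: dTV = ∑ μ_i (ĥ i)
  have hhμ : Summable (fun j => h j * μ j) := by
    apply Summable.of_abs
    refine Summable.of_nonneg_of_le (fun j => abs_nonneg _) (f := μ) ?_ hμsum
    intro j
    rw [abs_mul]
    calc |h j| * |μ j| ≤ 1 * |μ j| := mul_le_mul_of_nonneg_right (hh1 j) (abs_nonneg _)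
      _ = μ j := by rw [one_mul, abs_of_nonneg (hμ0 j)]
  have hhπ : Summable (fun j => h j * pim j) := by
    apply Summable.of_abs
    refine Summable.of_nonneg_of_le (fun j => abs_nonneg _) (f := pim) ?_ hπsum
    intro j
    rw [abs_mul]
    calc |h j| * |pim j| ≤ 1 * |pim j| := mul_le_mul_of_nonneg_right (hh1 j) (abs_nonneg _)
      _ = pim j := by rw [one_mul, abs_of_nonneg (hpim.1 j)]
  have hcb : |c| ≤ 1 := by
    rw [hcdef]
    calc |∑' k, h k * pim k| ≤ ∑' k, |h k| * |pim k| := by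
          simpa [Real.norm_eq_abs, abs_mul] using
            norm_tsum_le_tsum_norm (f := fun k => h k * pim k)
            (by simpa [Real.norm_eq_abs, abs_mul] using hhπ.abs)
      _ ≤ ∑' k, pim k := by
          refine Summable.tsum_le_tsum (fun k => ?_)
            (hhπ.abs.congr (fun k => abs_mul (h k) (pim k))) hπsum
          calc |h k| * |pim k| ≤ 1 * |pim k| :=
                mul_le_mul_of_nonneg_right (hh1 k) (abs_nonneg _)
            _ = pim k := by rw [one_mul, abs_of_nonneg (hpim.1 k)]
      _ = 1 := hpim.2.1.tsum_eq
  have hhat : Summable (fun i => μ i * (h i - c)) := by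
    apply Summable.of_abs
    refine Summable.of_nonneg_of_le (fun i => abs_nonneg _)
      (f := fun i => 2 * μ i) ?_ (hμsum.mul_left 2)
    intro i
    rw [abs_mul, abs_of_nonneg (hμ0 i)]
    calc μ i * |h i - c| ≤ μ i * 2 := by
          apply mul_le_mul_of_nonneg_left _ (hμ0 i)
          calc |h i - c| ≤ |h i| + |c| := abs_sub _ _
            _ ≤ 1 + 1 := add_le_add (hh1 i) hcb
            _ = 2 := by norm_num
      _ = 2 * μ i := by ring
  have E1 : dTV μ pim = ∑' i, μ i * (h i - c) := by
    have e1 : dTV μ pim = ∑' j, h j * (μ j - pim j) := by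
      rw [dTV]
      refine tsum_congr (fun j => ?_)
      by_cases hc' : pim j ≤ μ j
      · rw [hhdef]; simp only [if_pos hc', one_mul]
        rw [abs_of_nonneg (sub_nonneg.mpr hc')]
      · rw [hhdef]; simp only [if_neg hc']
        rw [abs_of_neg (sub_neg.mpr (lt_of_not_ge hc'))]; ring
    have e2 : ∑' j, h j * (μ j - pim j) = (∑' j, h j * μ j) - c := by
      rw [tsum_congr (fun j => mul_sub (h j) (μ j) (pim j)),
        Summable.tsum_sub hhμ hhπ, hcdef]
    have e3 : ∑' i, μ i * (h i - c) = (∑' j, h j * μ j) - c := by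
      rw [tsum_congr (fun i => mul_sub (μ i) (h i) c),
        Summable.tsum_sub (hhμ.congr fun j => mul_comm (h j) (μ j)) (hμsum.mul_right c),
        tsum_mul_right, hμ1.tsum_eq, one_mul]
      congr 1
      exact tsum_congr (fun j => mul_comm (μ j) (h j))
    rw [e1, e2, e3]
  -- Stein's identity
  set Pfin : ℕ → ℝ := fun i => ∑ k ∈ Finset.range (i+2), P i k * f k with hPfindef
  have hstein : ∀ i, h i - c = Pfin i - f i := fun i => steinA hP' hmseq i
  have E2 : dTV μ pim = ∑' i, μ i * (Pfin i - f i) := by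
    rw [E1]; exact tsum_congr (fun i => by rw [hstein i])
  -- replace f by g using stationarity of μ under Q
  have hμgf : Summable (fun i => μ i * (g i - f i)) :=
    (hμg.sub hμf).congr (fun i => (mul_sub (μ i) (g i) (f i)).symm)
  have hμgf0 : ∑' i, μ i * (g i - f i) = 0 := by
    rw [tsum_congr (fun i => mul_sub (μ i) (g i) (f i)), Summable.tsum_sub hμg hμf, hB, sub_self]
  have hμPg : Summable (fun i => μ i * (Pfin i - g i)) := by
    have := (hhat.congr (fun i => by rw [hstein i])).sub hμgf
    exact this.congr (fun i => by ring)
  have E3 : dTV μ pim = ∑' i, μ i * (Pfin i - g i) := by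
    rw [E2]
    have : ∀ i, μ i * (Pfin i - f i) = μ i * (Pfin i - g i) + μ i * (g i - f i) :=
      fun i => by ring
    rw [tsum_congr this, Summable.tsum_add hμPg hμgf, hμgf0, add_zero]
  -- the Abel-summation representation
  have hPfin_abel : ∀ i, Pfin i = ∑' j, m j * tail (P i) j := by
    intro i
    obtain ⟨_, _, h3⟩ := key_fubini (hPnn i) (hkP i) hmb
    rw [hPfindef]
    simp only
    rw [← h3, tsum_eq_sum (s := Finset.range (i+2)) (fun k hk => by
      rw [hPzero i k (by have := Finset.mem_range.not.mp hk; omega),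
        zero_mul])]
  have hPm_summ : ∀ i, Summable (fun j => m j * tail (P i) j) :=
    fun i => (key_fubini (hPnn i) (hkP i) hmb).2.1
  -- sign extraction from domination
  obtain ⟨σ, hσx, hσΔ⟩ : ∃ σ : ℝ, (∀ x : ℝ, σ * x ≤ |x|) ∧
      (∀ i j, |tail (P i) j - tail (Q i) j| = σ * (tail (P i) j - tail (Q i) j)) := by
    rcases hdom with hd | hd
    · exact ⟨1, fun x => by rw [one_mul]; exact le_abs_self x,
        fun i j => by rw [one_mul, abs_of_nonneg (sub_nonneg.mpr (hd i j))]⟩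
    · exact ⟨-1, fun x => by rw [neg_one_mul]; exact neg_le_abs x,
        fun i j => by rw [neg_one_mul, abs_of_nonpos (sub_nonpos.mpr (hd i j))]⟩
  -- termwise bound
  have hterm : ∀ i, μ i * (Pfin i - g i) ≤ (S * σ) * (μ i * TP i - μ i * TQ i) := by
    intro i
    by_cases hne : μ i = 0
    · simp [hne]
    · obtain ⟨_, hQm_summ, hQabel⟩ := key_fubini (hQ.1 i) (hQrowSummable i hne) hmb
      have htailQ : Summable (tail (Q i)) := (tail_facts (hQ.1 i) (hQrowSummable i hne)).1
      have htailQsum : (∑' j, tail (Q i) j) = TQ i :=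
        (tail_facts (hQ.1 i) (hQrowSummable i hne)).2
      have hgval : g i = ∑' j, m j * tail (Q i) j := by
        rw [hgdef]
        simp only
        rw [← hQabel]
      have h1 : Pfin i - g i = ∑' j, (m j * tail (P i) j - m j * tail (Q i) j) := by
        rw [hPfin_abel i, hgval, Summable.tsum_sub (hPm_summ i) hQm_summ]
      have hΔsum : Summable (fun j => tail (P i) j - tail (Q i) j) :=
        (htailP i).sub htailQ
      have hle : Pfin i - g i ≤ (S * σ) * (TP i - TQ i) := by
        rw [h1]
        have step : (∑' j, (m j * tail (P i) j - m j * tail (Q i) j))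
            ≤ ∑' j, (S * σ) * (tail (P i) j - tail (Q i) j) := by
          refine Summable.tsum_le_tsum (fun j => ?_)
            ((hPm_summ i).sub hQm_summ) (hΔsum.mul_left (S * σ))
          have e : m j * tail (P i) j - m j * tail (Q i) j
              = m j * (tail (P i) j - tail (Q i) j) := by ring
          rw [e]
          calc m j * (tail (P i) j - tail (Q i) j)
              ≤ |m j * (tail (P i) j - tail (Q i) j)| := le_abs_self _
            _ = |m j| * |tail (P i) j - tail (Q i) j| := abs_mul _ _
            _ ≤ S * |tail (P i) j - tail (Q i) j| :=
                mul_le_mul_of_nonneg_right (hmb j) (abs_nonneg _)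
            _ = (S * σ) * (tail (P i) j - tail (Q i) j) := by rw [hσΔ i j]; ring
        calc (∑' j, (m j * tail (P i) j - m j * tail (Q i) j))
            ≤ ∑' j, (S * σ) * (tail (P i) j - tail (Q i) j) := step
          _ = (S * σ) * (TP i - TQ i) := by
              rw [tsum_mul_left, Summable.tsum_sub (htailP i) htailQ, htailQsum]
      calc μ i * (Pfin i - g i) ≤ μ i * ((S * σ) * (TP i - TQ i)) :=
            mul_le_mul_of_nonneg_left hle (hμ0 i)
        _ = (S * σ) * (μ i * TP i - μ i * TQ i) := by ring
  have hRsum : Summable (fun i => (S * σ) * (μ i * TP i - μ i * TQ i)) :=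
    ((hμTP.sub hμTQ).mul_left (S * σ))
  -- final chain
  calc dTV μ pim = ∑' i, μ i * (Pfin i - g i) := E3
    _ ≤ ∑' i, (S * σ) * (μ i * TP i - μ i * TQ i) :=
        Summable.tsum_le_tsum hterm hμPg hRsum
    _ = (S * σ) * ((∑' i, μ i * TP i) - ∑' i, μ i * TQ i) := by
        rw [tsum_mul_left, Summable.tsum_sub hμTP hμTQ]
    _ = S * (σ * ((∑' i, μ i * TP i) - ∑' k : ℕ, (k:ℝ) * μ k)) := by
        rw [hEX]; ring
    _ ≤ S * |(∑' i, μ i * TP i) - ∑' k : ℕ, (k:ℝ) * μ k| :=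
        mul_le_mul_of_nonneg_left (hσx _) hS0
    _ = S * |(∑' k : ℕ, (k : ℝ) * μ k) - ∑' i, μ i * ∑' j : ℕ, tail (P i) j| := by
        rw [abs_sub_comm]
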